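/- arXiv:1504.03268 — 4 statements merged into one kernel-verified Lean document; each statement's English description precedes it below -/
import Mathlib

section
/- Let f : ℝⁿ × ℝᵖ → ℝⁿ, let β > 0, and let V : ℝⁿ → ℝ be differentiable with V(0) ≤ β. Suppose the dissipation inequality ∇V(x)ᵀ f(x, w) ≤ wᵀ w holds for all x ∈ ℝⁿ and w ∈ ℝᵖ. Let w : [0, ∞) → ℝᵖ be continuous with ∫₀^∞ ‖w(t)‖² dt ≤ β, and let x : [0, ∞) → ℝⁿ be differentiable with x(0) = 0 and x′(t) = f(x(t), w(t)) for all t ≥ 0. Then V(x(t)) ≤ 2β for all t ≥ 0; that is, the sublevel set {x : V(x) ≤ 2β} is invariant along the trajectory. -/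
open RealInnerProductSpace MeasureTheory Set

/-! Integrating the dissipation inequality along the trajectory gives
`V (x t) ≤ V 0 + ∫₀ᵗ ‖w‖² ≤ β + β`. -/

theorem HasGradientAt.comp_hasDerivAt {E : Type*} [NormedAddCommGroup E] [InnerProductSpace ℝ E]
    [CompleteSpace E] {V : E → ℝ} {V' : E} {x : ℝ → E} {x' : E} {t : ℝ}
    (hV : HasGradientAt V V' (x t)) (hx : HasDerivAt x x' t) :
    HasDerivAt (fun s => V (x s)) ⟪V', x'⟫ t := by
  simpa [Function.comp_def] using hV.hasFDerivAt.comp_hasDerivAt t hx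

theorem setIntegral_le_of_lintegral_le {α : Type*} [MeasurableSpace α] {μ : Measure α}
    {g : α → ℝ} {s S : Set α} {β : ℝ} (hg : 0 ≤ g) (hgm : AEStronglyMeasurable g (μ.restrict s))
    (hsS : s ⊆ S) (hβ : 0 ≤ β) (h : ∫⁻ a in S, ENNReal.ofReal (g a) ∂μ ≤ ENNReal.ofReal β) :
    ∫ a in s, g a ∂μ ≤ β := by
  rw [integral_eq_lintegral_of_nonneg_ae (.of_forall hg) hgm]
  exact ENNReal.toReal_le_of_le_ofReal hβ ((lintegral_mono_set hsS).trans h)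

theorem sub_le_integral_of_dissipation {E W : Type*} [NormedAddCommGroup E]
    [InnerProductSpace ℝ E] [CompleteSpace E] {V : E → ℝ} {f : E → W → E} {r : W → ℝ}
    (hV : Differentiable ℝ V) (hdiss : ∀ x w, ⟪gradient V x, f x w⟫ ≤ r w)
    {w : ℝ → W} (hr : Continuous fun t => r (w t)) {x : ℝ → E} {a b : ℝ} (hab : a ≤ b)
    (hx : ∀ t ∈ Icc a b, HasDerivAt x (f (x t) (w t)) t) :
    V (x b) - V (x a) ≤ ∫ t in a..b, r (w t) := by
  have hVx : ∀ t ∈ Icc a b,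
      HasDerivAt (fun s => V (x s)) ⟪gradient V (x t), f (x t) (w t)⟫ t := fun t ht =>
    (hV (x t)).hasGradientAt.comp_hasDerivAt (hx t ht)
  exact intervalIntegral.sub_le_integral_of_hasDeriv_right_of_le hab
    (fun t ht => (hVx t ht).continuousAt.continuousWithinAt)
    (fun t ht => (hVx t (Ioo_subset_Icc_self ht)).hasDerivWithinAt)
    hr.integrableOn_Icc (fun t _ => hdiss _ _)

/-- **Reachability, Proposition 3.**
If a differentiable `V` with `V(0) ≤ β` satisfies the dissipation inequality
`⟨∇V(x), f(x,w)⟩ ≤ wᵀw` for all `x, w`, and the disturbance satisfies the energy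
bound `∫₀^∞ ‖w(t)‖² dt ≤ β`, then along any trajectory starting at the origin with
`x′ = f(x, w)` one has `V(x(t)) ≤ 2β` for all `t ≥ 0`. -/
theorem stmt7 (n p : ℕ)
    (f : EuclideanSpace ℝ (Fin n) → EuclideanSpace ℝ (Fin p) → EuclideanSpace ℝ (Fin n))
    (β : ℝ) (hβ : 0 < β)
    (V : EuclideanSpace ℝ (Fin n) → ℝ)
    (hVdiff : Differentiable ℝ V)
    (hV0 : V 0 ≤ β)
    (hdiss : ∀ x w, ⟪gradient V x, f x w⟫ ≤ ⟪w, w⟫)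
    (w : ℝ → EuclideanSpace ℝ (Fin p)) (hw : Continuous w)
    (hwE : ∫⁻ t in Set.Ioi (0 : ℝ), ENNReal.ofReal (‖w t‖ ^ 2) ≤ ENNReal.ofReal β)
    (x : ℝ → EuclideanSpace ℝ (Fin n)) (hx0 : x 0 = 0)
    (hx : ∀ t ≥ (0 : ℝ), HasDerivAt x (f (x t) (w t)) t) :
    ∀ t ≥ (0 : ℝ), V (x t) ≤ 2 * β := by
  intro t ht
  have hgrowth : V (x t) - V (x 0) ≤ ∫ s in (0 : ℝ)..t, ‖w s‖ ^ 2 :=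
    sub_le_integral_of_dissipation hVdiff
      (fun x w => (hdiss x w).trans_eq (real_inner_self_eq_norm_sq w)) (by fun_prop) ht
      (fun s hs => hx s hs.1)
  have henergy : ∫ s in (0 : ℝ)..t, ‖w s‖ ^ 2 ≤ β := by
    rw [intervalIntegral.integral_of_le ht]
    have hcont : Continuous fun s => ‖w s‖ ^ 2 := by fun_prop
    exact setIntegral_le_of_lintegral_le (fun s => sq_nonneg ‖w s‖) hcont.aestronglyMeasurable
      Ioc_subset_Ioi_self hβ.le hwE
  rw [hx0] at hgrowth
  linarith
end

section
/- Let N and N_g be positive integers and let P be a symmetric real N×N matrix all of whose entries lie in {0, 1}, which is positive semidefinite, has rank N_g, and has all diagonal entries equal to 1. Then there exists an N×N_g real matrix ρ all of whose entries lie in {0, 1}, satisfying Σ_{j=1}^{N_g} ρ_{ij} = 1 for every i ∈ {1,…,N}, such that P = ρ ρᵀ. -/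
/-!
The vector `eᵢ - eⱼ + eₖ` shows that for a real positive semidefinite matrix with unit diagonal,
`Pᵢⱼ = Pⱼₖ = 1` forces `Pᵢₖ ≥ 1/2`. A `{0,1}`-valued such `P` is therefore the indicator of an
equivalence relation on the indices, i.e. `P = ρ ρᵀ` for the class-membership matrix `ρ`. The
columns of `ρ` are linearly independent, so the number of classes is `rank ρ = rank (ρ ρᵀ)`.
-/

open Matrix

namespace Matrix.PosSemidef

variable {n : Type*} [Fintype n] [DecidableEq n] {P : Matrix n n ℝ}

theorem two_mul_sub_le_sum_diag (hP : P.PosSemidef) (i j k : n) :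
    2 * (P i j + P j k - P i k) ≤ P i i + P j j + P k k := by
  have hsymm : ∀ a b, P b a = P a b := fun a b => by simpa using hP.isHermitian.apply a b
  have hx := hP.dotProduct_mulVec_nonneg (Pi.single i 1 - Pi.single j 1 + Pi.single k 1)
  simp only [star_trivial, mulVec_add, mulVec_sub, mulVec_single, MulOpposite.op_one, one_smul,
    dotProduct_add, dotProduct_sub, add_dotProduct, sub_dotProduct, single_dotProduct, col_apply,
    one_mul] at hx
  linarith [hsymm i j, hsymm j k, hsymm i k]

theorem equivalence_eq_one (hP : P.PosSemidef) (h01 : ∀ i j, P i j = 0 ∨ P i j = 1)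
    (hdiag : ∀ i, P i i = 1) : Equivalence (fun i j => P i j = 1) where
  refl := hdiag
  symm {i j} h := by simpa [h] using hP.isHermitian.apply i j
  trans {i j k} hij hjk := by
    have := hP.two_mul_sub_le_sum_diag i j k
    rw [hij, hjk, hdiag, hdiag, hdiag] at this
    exact (h01 i k).resolve_left fun h => by linarith

end Matrix.PosSemidef

namespace Setoid

variable {n : Type*} (s : Setoid n) [DecidableEq (Quotient s)]

def membershipMatrix (R : Type*) [Zero R] [One R] : Matrix n (Quotient s) R :=
  of fun i q => if Quotient.mk s i = q then 1 else 0

variable {R : Type*}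

theorem membershipMatrix_eq_zero_or_one [Zero R] [One R] (i : n) (q : Quotient s) :
    s.membershipMatrix R i q = 0 ∨ s.membershipMatrix R i q = 1 := by
  by_cases h : Quotient.mk s i = q <;> simp [membershipMatrix, h]

theorem sum_membershipMatrix [Fintype (Quotient s)] [AddCommMonoidWithOne R] (i : n) :
    ∑ q, s.membershipMatrix R i q = 1 := by
  simp [membershipMatrix]

theorem membershipMatrix_mul_transpose_apply [Fintype (Quotient s)] [NonAssocSemiring R]
    (i k : n) :
    (s.membershipMatrix R * (s.membershipMatrix R)ᵀ) i k =
      if Quotient.mk s i = Quotient.mk s k then 1 else 0 := by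
  simp [membershipMatrix, mul_apply, eq_comm]

theorem rank_membershipMatrix [Fintype (Quotient s)] [Field R] :
    (s.membershipMatrix R).rank = Fintype.card (Quotient s) := by
  have hinj : Function.Injective (s.membershipMatrix R).mulVecLin := by
    rw [← LinearMap.ker_eq_bot, LinearMap.ker_eq_bot']
    intro v hv
    funext q
    obtain ⟨i, rfl⟩ := Quotient.exists_rep q
    simpa [membershipMatrix, mulVec, dotProduct] using congrFun hv i
  rw [rank, LinearMap.finrank_range_of_inj hinj, Module.finrank_fintype_fun_eq_card]

end Setoid

theorem stmt9_general (N Ng : ℕ)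
    (P : Matrix (Fin N) (Fin N) ℝ)
    (h01 : ∀ i j, P i j = 0 ∨ P i j = 1)
    (hpsd : P.PosSemidef)
    (hrank : P.rank = Ng)
    (hdiag : ∀ i, P i i = 1) :
    ∃ ρ : Matrix (Fin N) (Fin Ng) ℝ,
      (∀ i j, ρ i j = 0 ∨ ρ i j = 1) ∧
      (∀ i, ∑ j, ρ i j = 1) ∧
      P = ρ * ρᵀ := by
  classical
  let s : Setoid (Fin N) := ⟨_, hpsd.equivalence_eq_one h01 hdiag⟩
  let ρ := s.membershipMatrix ℝ
  have hP : P = ρ * ρᵀ := by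
    ext i k
    rw [s.membershipMatrix_mul_transpose_apply]
    split_ifs with hik
    · exact Quotient.eq.mp hik
    · exact (h01 i k).resolve_right (fun h => hik (Quotient.sound (s := s) h))
  have hcard : Fintype.card (Quotient s) = Ng := by
    rw [← s.rank_membershipMatrix (R := ℝ), ← rank_self_mul_transpose, ← hP, hrank]
  let e := Fintype.equivFinOfCardEq hcard
  refine ⟨ρ.submatrix id e.symm, fun i j => s.membershipMatrix_eq_zero_or_one i _,
    fun i => ?_, ?_⟩
  · rw [← s.sum_membershipMatrix i]
    exact e.symm.sum_comp (ρ i)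
  · rw [transpose_submatrix, submatrix_mul_equiv, submatrix_id_id, hP]

/-- **Proposition 4, factorization.**
A symmetric `{0,1}`-valued positive semidefinite `N × N` matrix `P` of rank `N_g`
with unit diagonal factors as `P = ρ ρᵀ` for a `{0,1}`-valued `N × N_g` matrix `ρ`
each of whose rows sums to `1`. -/
theorem stmt9 (N Ng : ℕ) (hN : 0 < N) (hNg : 0 < Ng)
    (P : Matrix (Fin N) (Fin N) ℝ) (hsymm : P.IsSymm)
    (h01 : ∀ i j, P i j = 0 ∨ P i j = 1)
    (hpsd : P.PosSemidef)
    (hrank : P.rank = Ng)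
    (hdiag : ∀ i, P i i = 1) :
    ∃ ρ : Matrix (Fin N) (Fin Ng) ℝ,
      (∀ i j, ρ i j = 0 ∨ ρ i j = 1) ∧
      (∀ i, ∑ j, ρ i j = 1) ∧
      P = ρ * ρᵀ :=
  stmt9_general N Ng P h01 hpsd hrank hdiag
end

section
/- Let N and N_g be positive integers and let P be a symmetric real N×N matrix all of whose entries lie in {0, 1}, which is positive semidefinite, has rank N_g, and has all diagonal entries equal to 1. Then there exist a permutation matrix T ∈ ℝ^{N×N} and positive integers N₁,…,N_{N_g} with N₁ + … + N_{N_g} = N such that P = T · diag(J_{N₁},…,J_{N_{N_g}}) · Tᵀ, where J_k denotes the k×k matrix all of whose entries are 1 and diag(J_{N₁},…,J_{N_{N_g}}) is the block-diagonal matrix with these all-ones blocks. -/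
/-!
Testing the quadratic form of `P` at `eᵢ - eⱼ + eₖ` shows that `P i j = 1` is a transitive
relation, so by symmetry and the unit diagonal an equivalence relation `i ~ j`, and `P` is the
indicator matrix of `~`. Its rows are the indicator vectors of the classes, which are linearly
independent, so there are exactly `rank P` classes; listing the indices class by class puts `P`
in block-diagonal form with all-ones blocks.
-/

open Matrix

namespace Matrix

variable {n ι : Type*} [Fintype n] [DecidableEq ι]

def fiberIndicator (R : Type*) [Zero R] [One R] (g : n → ι) : Matrix n n R :=
  of fun i j => if g i = g j then 1 else 0

theorem PosSemidef.apply_eq_one_trans [DecidableEq n] {P : Matrix n n ℝ} (hP : P.PosSemidef)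
    (h01 : ∀ i j, P i j = 0 ∨ P i j = 1) (hdiag : ∀ i, P i i = 1) {i j k : n}
    (hij : P i j = 1) (hjk : P j k = 1) : P i k = 1 := by
  have hsymm (a b : n) : P a b = P b a := by
    simpa using (hP.isHermitian.apply a b).symm
  have hentry (a b : n) : Pi.single a (1 : ℝ) ⬝ᵥ (P *ᵥ Pi.single b 1) = P a b := by
    simp [mulVec_single, single_dotProduct]
  -- the quadratic form at `eᵢ - eⱼ + eₖ` equals `2 P i k - 1`
  have hform := hP.dotProduct_mulVec_nonneg (Pi.single i 1 - Pi.single j 1 + Pi.single k 1)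
  simp only [star_trivial, mulVec_add, mulVec_sub, add_dotProduct, sub_dotProduct,
    dotProduct_add, dotProduct_sub, hentry, hdiag, hsymm j i, hsymm k i, hsymm k j, hij,
    hjk] at hform
  rcases h01 i k with h | h
  · linarith
  · exact h

theorem PosSemidef.exists_eq_fiberIndicator {P : Matrix n n ℝ} (hP : P.PosSemidef)
    (h01 : ∀ i j, P i j = 0 ∨ P i j = 1) (hdiag : ∀ i, P i i = 1) :
    ∃ (m : ℕ) (g : n → Fin m), Function.Surjective g ∧ P = fiberIndicator ℝ g := by
  classical
  let s : Setoid n :=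
    { r := fun i j => P i j = 1
      iseqv :=
        { refl := hdiag
          symm := fun {i j} h => by simpa [h] using (hP.isHermitian.apply j i).symm
          trans := hP.apply_eq_one_trans h01 hdiag } }
  have : Fintype (Quotient s) := Fintype.ofFinite _
  let f := Fintype.equivFin (Quotient s)
  refine ⟨_, f ∘ Quotient.mk s, f.surjective.comp Quotient.mk_surjective, ?_⟩
  ext i j
  have hiff : Quotient.mk s i = Quotient.mk s j ↔ P i j = 1 := Quotient.eq
  rcases h01 i j with h | h <;> simp [fiberIndicator, hiff, h]

section Field

variable {K : Type*} [Field K] [Fintype ι]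

theorem rank_fiberIndicator {g : n → ι} (hg : Function.Surjective g) :
    (fiberIndicator K g).rank = Fintype.card ι := by
  let χ : ι → n → K := fun q j => if q = g j then 1 else 0
  have hχ : LinearIndependent K χ := by
    refine Fintype.linearIndependent_iff.2 fun c hc q => ?_
    obtain ⟨i, rfl⟩ := hg q
    simpa [χ] using congrFun hc i
  have hrows : Set.range (fiberIndicator K g).row = Set.range χ := by
    rw [← hg.range_comp]
    rfl
  rw [rank_eq_finrank_span_row, hrows, finrank_span_eq_card hχ]

end Field

noncomputable def fiberEquiv (g : n → ι) : (Σ j, Fin (Fintype.card {i // g i = j})) ≃ n :=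
  (Equiv.sigmaCongrRight fun j => (Fintype.equivFin {i // g i = j}).symm).trans
    (Equiv.sigmaFiberEquiv g)

theorem reindex_fiberEquiv_blockDiagonal' (R : Type*) [Zero R] [One R] (g : n → ι) :
    reindex (fiberEquiv g) (fiberEquiv g)
      (blockDiagonal' fun j => of fun (_ _ : Fin (Fintype.card {i // g i = j})) => (1 : R)) =
      fiberIndicator R g := by
  ext i j
  rw [reindex_apply, submatrix_apply, blockDiagonal'_apply]
  simp only [fiberIndicator, of_apply]
  -- the block index `((fiberEquiv g).symm i).1` is `g i` by definition
  split_ifs with hblock hfiber hfiber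
  · rfl
  · exact absurd hblock hfiber
  · exact absurd hfiber hblock
  · rfl

end Matrix

theorem stmt10_general (N Ng : ℕ)
    (P : Matrix (Fin N) (Fin N) ℝ)
    (h01 : ∀ i j, P i j = 0 ∨ P i j = 1)
    (hpsd : P.PosSemidef)
    (hrank : P.rank = Ng)
    (hdiag : ∀ i, P i i = 1) :
    ∃ (σ : Equiv.Perm (Fin N)) (c : Fin Ng → ℕ)
      (e : (Σ j : Fin Ng, Fin (c j)) ≃ Fin N),
      (∀ j, 0 < c j) ∧ (∑ j, c j = N) ∧
      P = (σ.permMatrix ℝ) *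
        (Matrix.reindex e e
          (Matrix.blockDiagonal' fun j => Matrix.of fun (_ _ : Fin (c j)) => (1 : ℝ))) *
        (σ.permMatrix ℝ)ᵀ := by
  obtain ⟨m, g, hg, rfl⟩ := hpsd.exists_eq_fiberIndicator h01 hdiag
  obtain rfl : m = Ng := by simpa [rank_fiberIndicator hg] using hrank
  refine ⟨1, fun j => Fintype.card {i // g i = j}, fiberEquiv g, fun j => ?_, ?_, ?_⟩
  · obtain ⟨i, rfl⟩ := hg j
    exact Fintype.card_pos_iff.2 ⟨⟨i, rfl⟩⟩
  · simpa using Fintype.card_congr (fiberEquiv g)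
  · rw [permMatrix_one, transpose_one, one_mul, mul_one, reindex_fiberEquiv_blockDiagonal']

/-- **Proposition 4, block structure.**
A symmetric `{0,1}`-valued positive semidefinite `N × N` matrix `P` of rank `N_g`
with unit diagonal is permutation-similar to a block-diagonal matrix of all-ones
blocks `J_{N₁}, …, J_{N_{N_g}}` with `N₁ + ⋯ + N_{N_g} = N` and each `Nⱼ > 0`.
The block-diagonal matrix `diag(J_{N₁}, …)` on `Σ j, Fin (Nⱼ)` is transported to an
`N × N` matrix along a bijection `e : (Σ j, Fin (Nⱼ)) ≃ Fin N`. -/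
theorem stmt10 (N Ng : ℕ) (hN : 0 < N) (hNg : 0 < Ng)
    (P : Matrix (Fin N) (Fin N) ℝ) (hsymm : P.IsSymm)
    (h01 : ∀ i j, P i j = 0 ∨ P i j = 1)
    (hpsd : P.PosSemidef)
    (hrank : P.rank = Ng)
    (hdiag : ∀ i, P i i = 1) :
    ∃ (σ : Equiv.Perm (Fin N)) (c : Fin Ng → ℕ)
      (e : (Σ j : Fin Ng, Fin (c j)) ≃ Fin N),
      (∀ j, 0 < c j) ∧ (∑ j, c j = N) ∧
      P = (σ.permMatrix ℝ) *
        (Matrix.reindex e e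
          (Matrix.blockDiagonal' fun j => Matrix.of fun (_ _ : Fin (c j)) => (1 : ℝ))) *
        (σ.permMatrix ℝ)ᵀ :=
  stmt10_general N Ng P h01 hpsd hrank hdiag
end

section
/- Let A ∈ ℝ^{n×n}, B ∈ ℝ^{n×p}, C ∈ ℝ^{q×n}, D ∈ ℝ^{q×p} be real matrices, let P be a symmetric positive semidefinite real n×n matrix, and let X be a symmetric real (p+q)×(p+q) matrix. Assume the dissipation condition: for all x ∈ ℝⁿ and v ∈ ℝᵖ, 2 xᵀ P (A x + B v) ≤ [v; C x + D v]ᵀ X [v; C x + D v]. Let v : [0, ∞) → ℝᵖ be continuous and let x : [0, ∞) → ℝⁿ be differentiable with x(0) = 0 and x′(t) = A x(t) + B v(t) for all t ≥ 0, and set y(t) = C x(t) + D v(t). Then for every T ≥ 0, ∫₀ᵀ [v(t); y(t)]ᵀ X [v(t); y(t)] dt ≥ x(T)ᵀ P x(T) ≥ 0; in particular the closed-loop linear system satisfies the time-domain integral quadratic constraint defined by the static multiplier X. -/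
open Matrix

/-!
`V(x) = xᵀ P x` is a storage function: along a trajectory its derivative is `2 xᵀ P ẋ`, which the
dissipation inequality bounds by the supply rate `[v; y]ᵀ X [v; y]`. Integrating from `0`, where
`V(x(0)) = 0`, gives `V(x(T)) ≤ ∫₀ᵀ [v; y]ᵀ X [v; y]`, and `V ≥ 0` because `P ⪰ 0`.
-/

section Derivatives

variable {𝕜 : Type*} [NontriviallyNormedField 𝕜] {ι κ : Type*} [Fintype ι]
  {x y : 𝕜 → ι → 𝕜} {x' y' : ι → 𝕜} {t : 𝕜}

theorem HasDerivAt.dotProduct (hx : HasDerivAt x x' t) (hy : HasDerivAt y y' t) :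
    HasDerivAt (fun s => x s ⬝ᵥ y s) (x' ⬝ᵥ y t + x t ⬝ᵥ y') t := by
  simp only [_root_.dotProduct, ← Finset.sum_add_distrib]
  exact HasDerivAt.fun_sum fun i _ => (hasDerivAt_pi.1 hx i).mul (hasDerivAt_pi.1 hy i)

theorem HasDerivAt.matrix_mulVec (M : Matrix κ ι 𝕜) (hx : HasDerivAt x x' t) :
    HasDerivAt (fun s => M *ᵥ x s) (M *ᵥ x') t := by
  refine hasDerivAt_pi.2 fun i => ?_
  simp only [mulVec]
  exact HasDerivAt.fun_sum fun j _ => (hasDerivAt_pi.1 hx j).const_mul (M i j)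

theorem Matrix.IsSymm.hasDerivAt_dotProduct_mulVec_self {P : Matrix ι ι 𝕜} (hP : P.IsSymm)
    (hx : HasDerivAt x x' t) :
    HasDerivAt (fun s => x s ⬝ᵥ P *ᵥ x s) (2 * (x t ⬝ᵥ P *ᵥ x')) t := by
  have hswap : x' ⬝ᵥ P *ᵥ x t = x t ⬝ᵥ P *ᵥ x' := by
    rw [dotProduct_mulVec, ← mulVec_transpose, hP.eq, dotProduct_comm]
  convert hx.dotProduct (hx.matrix_mulVec P) using 1
  rw [hswap]
  ring

end Derivatives

theorem Matrix.IsSymm.dotProduct_mulVec_self_le_integral {ι : Type*} [Fintype ι]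
    {P : Matrix ι ι ℝ} (hP : P.IsSymm) {x x' : ℝ → ι → ℝ} {s : ℝ → ℝ} {T : ℝ} (hT : 0 ≤ T)
    (hx : ∀ t ∈ Set.Icc 0 T, HasDerivAt x (x' t) t) (hx0 : x 0 = 0)
    (hs : MeasureTheory.IntegrableOn s (Set.Icc 0 T))
    (hdiss : ∀ t ∈ Set.Ioo 0 T, 2 * (x t ⬝ᵥ P *ᵥ x' t) ≤ s t) :
    x T ⬝ᵥ P *ᵥ x T ≤ ∫ t in 0..T, s t := by
  have hV := intervalIntegral.sub_le_integral_of_hasDeriv_right_of_le hT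
    (fun t ht => (hP.hasDerivAt_dotProduct_mulVec_self (hx t ht)).continuousAt.continuousWithinAt)
    (fun t ht => (hP.hasDerivAt_dotProduct_mulVec_self
      (hx t (Set.Ioo_subset_Icc_self ht))).hasDerivWithinAt) hs hdiss
  simpa [hx0] using hV

theorem stmt14_general (n p q : ℕ)
    (A : Matrix (Fin n) (Fin n) ℝ) (B : Matrix (Fin n) (Fin p) ℝ)
    (C : Matrix (Fin q) (Fin n) ℝ) (D : Matrix (Fin q) (Fin p) ℝ)
    (P : Matrix (Fin n) (Fin n) ℝ) (hP : P.PosSemidef)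
    (X : Matrix (Fin p ⊕ Fin q) (Fin p ⊕ Fin q) ℝ)
    (hdiss : ∀ (x : Fin n → ℝ) (v : Fin p → ℝ),
      2 * (x ⬝ᵥ P.mulVec (A.mulVec x + B.mulVec v)) ≤
        (Sum.elim v (C.mulVec x + D.mulVec v)) ⬝ᵥ
          X.mulVec (Sum.elim v (C.mulVec x + D.mulVec v)))
    (v : ℝ → Fin p → ℝ) (hv : Continuous v)
    (x : ℝ → Fin n → ℝ) (hx0 : x 0 = 0)
    (hx : ∀ t ≥ (0 : ℝ), HasDerivAt x (A.mulVec (x t) + B.mulVec (v t)) t)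
    (y : ℝ → Fin q → ℝ) (hy : ∀ t, y t = C.mulVec (x t) + D.mulVec (v t)) :
    ∀ T ≥ (0 : ℝ),
      x T ⬝ᵥ P.mulVec (x T) ≤
        (∫ t in (0 : ℝ)..T, (Sum.elim (v t) (y t)) ⬝ᵥ X.mulVec (Sum.elim (v t) (y t))) ∧
      0 ≤ x T ⬝ᵥ P.mulVec (x T) := by
  intro T hT
  have hPsymm : P.IsSymm := by simpa using hP.isHermitian
  have hxc : ContinuousOn x (Set.Icc 0 T) := fun t ht =>
    (hx t ht.1).continuousAt.continuousWithinAt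
  have hyc : ContinuousOn y (Set.Icc 0 T) := by
    simp only [funext hy]
    fun_prop
  have hwc : ContinuousOn (fun t => Sum.elim (v t) (y t)) (Set.Icc 0 T) :=
    Homeomorph.sumArrowHomeomorphProdArrow.symm.continuous.comp_continuousOn
      (hv.continuousOn.prodMk hyc)
  have hXc : Continuous fun w : Fin p ⊕ Fin q → ℝ => w ⬝ᵥ X *ᵥ w :=
    continuous_id.dotProduct (continuous_const.matrix_mulVec continuous_id)
  refine ⟨hPsymm.dotProduct_mulVec_self_le_integral hT (fun t ht => hx t ht.1) hx0
    (hXc.comp_continuousOn hwc).integrableOn_Icc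
    fun t _ => by simpa only [hy] using hdiss (x t) (v t), ?_⟩
  simpa using hP.dotProduct_mulVec_nonneg (x T)

/-- **LTI system satisfies the IQC defined by a static multiplier.**
If a quadratic storage function `V(x) = xᵀPx` with `P ⪰ 0` satisfies the dissipation
inequality `2xᵀP(Ax + Bv) ≤ [v; Cx + Dv]ᵀ X [v; Cx + Dv]` for all `x, v`, then along
any trajectory `x′ = Ax + Bv` with `x(0) = 0` and output `y = Cx + Dv`, for every
`T ≥ 0`, `∫₀ᵀ [v; y]ᵀ X [v; y] dt ≥ x(T)ᵀ P x(T) ≥ 0`. -/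
theorem stmt14 (n p q : ℕ)
    (A : Matrix (Fin n) (Fin n) ℝ) (B : Matrix (Fin n) (Fin p) ℝ)
    (C : Matrix (Fin q) (Fin n) ℝ) (D : Matrix (Fin q) (Fin p) ℝ)
    (P : Matrix (Fin n) (Fin n) ℝ) (hP : P.PosSemidef)
    (X : Matrix (Fin p ⊕ Fin q) (Fin p ⊕ Fin q) ℝ) (hX : X.IsSymm)
    (hdiss : ∀ (x : Fin n → ℝ) (v : Fin p → ℝ),
      2 * (x ⬝ᵥ P.mulVec (A.mulVec x + B.mulVec v)) ≤
        (Sum.elim v (C.mulVec x + D.mulVec v)) ⬝ᵥ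
          X.mulVec (Sum.elim v (C.mulVec x + D.mulVec v)))
    (v : ℝ → Fin p → ℝ) (hv : Continuous v)
    (x : ℝ → Fin n → ℝ) (hx0 : x 0 = 0)
    (hx : ∀ t ≥ (0 : ℝ), HasDerivAt x (A.mulVec (x t) + B.mulVec (v t)) t)
    (y : ℝ → Fin q → ℝ) (hy : ∀ t, y t = C.mulVec (x t) + D.mulVec (v t)) :
    ∀ T ≥ (0 : ℝ),
      x T ⬝ᵥ P.mulVec (x T) ≤
        (∫ t in (0 : ℝ)..T, (Sum.elim (v t) (y t)) ⬝ᵥ X.mulVec (Sum.elim (v t) (y t))) ∧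
      0 ≤ x T ⬝ᵥ P.mulVec (x T) :=
  stmt14_general n p q A B C D P hP X hdiss v hv x hx0 hx y hy
end
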